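/- arXiv:1205.3008 — 4 statements merged into one kernel-verified Lean document; each statement's English description precedes it below -/
import Mathlib

section
/- Let M be an n×n complex matrix whose Hermitian part H = (M + M†)/2 is positive semidefinite with the eigenvalue 0 having multiplicity μ. Then for every Hermitian positive definite matrix T, the sum of the geometric multiplicities of the eigenvalues of MT having zero real part is at most μ. -/
/-!
Let `H = (M + Mᴴ)/2` and let `x` be an eigenvector of `MT` for an eigenvalue `l` with
`Re l = 0`. For `y = Tx` one gets `yᴴ M y = l · xᴴ T x`, which is purely imaginary because
`xᴴ T x` is real; hence `yᴴ H y = Re (yᴴ M y) = 0`, and positive semidefiniteness of `H` gives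
`H y = 0`. So the injective map `T` sends the direct sum of these eigenspaces into `ker H`.
-/

open Matrix ComplexOrder

open Module in
theorem iSupIndep.finrank_biSup_eq_sum {K V ι : Type*} [DivisionRing K] [AddCommGroup V]
    [Module K V] [FiniteDimensional K V] {E : ι → Submodule K V} (hE : iSupIndep E)
    (S : Finset ι) :
    finrank K ↥(⨆ l ∈ S, E l) = ∑ l ∈ S, finrank K (E l) := by
  classical
  induction S using Finset.induction_on with
  | empty => simp
  | @insert a s ha ih =>
    have hdisj : Disjoint (E a) (⨆ l ∈ s, E l) := by
      simpa using hE.disjoint_biSup (x := a) (y := (s : Set ι)) (by simpa using ha)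
    have hsum := Submodule.finrank_sup_add_finrank_inf_eq (E a) (⨆ l ∈ s, E l)
    rw [hdisj.eq_bot, finrank_bot, add_zero] at hsum
    rw [Finset.iSup_insert, hsum, Finset.sum_insert ha, ih]

namespace Matrix

variable {𝕜 n : Type*} [RCLike 𝕜] [Fintype n]

theorem star_dotProduct_hermitianPart_mulVec (M : Matrix n n 𝕜) (y : n → 𝕜) :
    star y ⬝ᵥ ((1 / 2 : 𝕜) • (M + Mᴴ)) *ᵥ y = (RCLike.re (star y ⬝ᵥ M *ᵥ y) : 𝕜) := by
  have hconj : star y ⬝ᵥ Mᴴ *ᵥ y = star (star y ⬝ᵥ M *ᵥ y) := by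
    rw [star_dotProduct, star_mulVec, conjTranspose_conjTranspose, ← dotProduct_mulVec]
  rw [smul_mulVec, dotProduct_smul, add_mulVec, dotProduct_add, hconj, RCLike.star_def,
    RCLike.add_conj, smul_eq_mul, ← mul_assoc]
  norm_num

theorem re_star_dotProduct_mulVec_mul_eq_zero {M T : Matrix n n 𝕜} (hT : T.IsHermitian)
    {l : 𝕜} (hl : RCLike.re l = 0) {x : n → 𝕜} (hx : (M * T) *ᵥ x = l • x) :
    RCLike.re (star (T *ᵥ x) ⬝ᵥ M *ᵥ (T *ᵥ x)) = 0 := by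
  have hquad : star (T *ᵥ x) ⬝ᵥ M *ᵥ (T *ᵥ x) = l * (star x ⬝ᵥ T *ᵥ x) := by
    rw [star_mulVec, ← dotProduct_mulVec, mulVec_mulVec x M T, hx, mulVec_smul, hT.eq,
      dotProduct_smul, smul_eq_mul]
  rw [hquad, RCLike.mul_re, hl, hT.im_star_dotProduct_mulVec_self]
  ring

theorem mulVec_mem_ker_hermitianPart_of_mem_eigenspace {M T : Matrix n n 𝕜}
    (hH : ((1 / 2 : 𝕜) • (M + Mᴴ)).PosSemidef) (hT : T.IsHermitian) {l : 𝕜}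
    (hl : RCLike.re l = 0) {x : n → 𝕜} (hx : x ∈ Module.End.eigenspace (M * T).mulVecLin l) :
    T *ᵥ x ∈ LinearMap.ker ((1 / 2 : 𝕜) • (M + Mᴴ)).mulVecLin := by
  have hx' : (M * T) *ᵥ x = l • x := Module.End.mem_eigenspace_iff.mp hx
  rw [LinearMap.mem_ker, mulVecLin_apply, ← hH.dotProduct_mulVec_zero_iff,
    star_dotProduct_hermitianPart_mulVec, re_star_dotProduct_mulVec_mul_eq_zero hT hl hx',
    RCLike.ofReal_zero]

end Matrix

/-- if the Hermitian part `H = (M + Mᴴ)/2` of `M` is positive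
semidefinite with `0` of multiplicity `μ` (the dimension of the kernel of `H`),
then for every Hermitian positive definite `T`, the sum of the geometric
multiplicities of the eigenvalues of `M * T` with zero real part is at most `μ`. -/
theorem stmt8 {n : ℕ} (M T : Matrix (Fin n) (Fin n) ℂ)
    (hH : ((1 / 2 : ℂ) • (M + Mᴴ)).PosSemidef)
    (μ : ℕ)
    (hμ : μ = Module.finrank ℂ
      (LinearMap.ker ((1 / 2 : ℂ) • (M + Mᴴ)).mulVecLin))
    (hT : T.PosDef)
    (S : Finset ℂ) (hS : ∀ l ∈ S, l.re = 0) :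
    ∑ l ∈ S, Module.finrank ℂ (Module.End.eigenspace (M * T).mulVecLin l) ≤ μ := by
  set W := ⨆ l ∈ S, Module.End.eigenspace (M * T).mulVecLin l
  have hTinj : Function.Injective T.mulVecLin :=
    mulVec_injective_iff_isUnit.mpr hT.isUnit
  have hWker : W.map T.mulVecLin ≤ LinearMap.ker ((1 / 2 : ℂ) • (M + Mᴴ)).mulVecLin :=
    Submodule.map_le_iff_le_comap.mpr <| iSup₂_le fun l hl _ hx =>
      mulVec_mem_ker_hermitianPart_of_mem_eigenspace hH hT.isHermitian (hS l hl) hx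
  calc ∑ l ∈ S, Module.finrank ℂ (Module.End.eigenspace (M * T).mulVecLin l)
      = Module.finrank ℂ W :=
      ((Module.End.eigenspaces_iSupIndep _).finrank_biSup_eq_sum S).symm
    _ = Module.finrank ℂ (W.map T.mulVecLin) :=
      (Submodule.equivMapOfInjective _ hTinj W).finrank_eq
    _ ≤ μ := hμ ▸ Submodule.finrank_mono hWker
end

section
/- Levy–Desplanques type theorem for irreducible matrices: let M be an irreducible n×n complex matrix such that |M_{ii}| ≥ ∑_{j≠i}|M_{ij}| for every i, with strict inequality for at least one i. Then det(M) ≠ 0. -/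
/-!
Suppose `M *ᵥ v = 0` with `v ≠ 0` and let `i₀` maximise `‖v i‖`. In a weakly dominant row `i`
where `‖v i‖` is maximal, the estimate `‖M i i‖ ‖v i‖ ≤ ∑_{j ≠ i} ‖M i j‖ ‖v j‖` forces
`‖v j‖ = ‖v i‖` for every `j` with `M i j ≠ 0`. By irreducibility the maximal modulus therefore
spreads from `i₀` to every index, in particular to a strictly dominant row, where the same
estimate forces `v = 0`.
-/

open Finset

namespace Matrix

variable {ι K : Type*} [Fintype ι] [DecidableEq ι] [NormedField K] {M : Matrix ι ι K}
  {v : ι → K}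

theorem norm_diag_mul_le_sum_of_mulVec_eq_zero (hMv : M *ᵥ v = 0) (i : ι) :
    ‖M i i‖ * ‖v i‖ ≤ ∑ j ∈ univ.erase i, ‖M i j‖ * ‖v j‖ := by
  have hrow : M i i * v i = -∑ j ∈ univ.erase i, M i j * v j := by
    rw [eq_neg_iff_add_eq_zero, add_comm, sum_erase_add _ _ (mem_univ i)]
    exact congrFun hMv i
  calc ‖M i i‖ * ‖v i‖ = ‖∑ j ∈ univ.erase i, M i j * v j‖ := by
        rw [← norm_mul, hrow, norm_neg]
    _ ≤ ∑ j ∈ univ.erase i, ‖M i j‖ * ‖v j‖ :=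
        (norm_sum_le _ _).trans_eq (by simp_rw [norm_mul])

theorem sum_norm_mul_le_sum_norm_mul_of_forall_norm_le {i : ι} (hmax : ∀ j, ‖v j‖ ≤ ‖v i‖) :
    ∑ j ∈ univ.erase i, ‖M i j‖ * ‖v j‖ ≤ (∑ j ∈ univ.erase i, ‖M i j‖) * ‖v i‖ := by
  rw [sum_mul]
  exact sum_le_sum fun j _ => mul_le_mul_of_nonneg_left (hmax j) (norm_nonneg _)

theorem norm_apply_eq_of_mulVec_eq_zero_of_forall_norm_le (hMv : M *ᵥ v = 0) {i j : ι}
    (hmax : ∀ k, ‖v k‖ ≤ ‖v i‖) (hdom : ∑ k ∈ univ.erase i, ‖M i k‖ ≤ ‖M i i‖)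
    (hij : i ≠ j) (hM : M i j ≠ 0) : ‖v j‖ = ‖v i‖ := by
  by_contra hne
  have hlt : ∑ k ∈ univ.erase i, ‖M i k‖ * ‖v k‖ < (∑ k ∈ univ.erase i, ‖M i k‖) * ‖v i‖ := by
    rw [sum_mul]
    refine sum_lt_sum (fun k _ => mul_le_mul_of_nonneg_left (hmax k) (norm_nonneg _))
      ⟨j, mem_erase.2 ⟨hij.symm, mem_univ j⟩, ?_⟩
    exact mul_lt_mul_of_pos_left ((hmax j).lt_of_ne hne) (norm_pos_iff.2 hM)
  have hvi : 0 ≤ ‖v i‖ := norm_nonneg _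
  linarith [norm_diag_mul_le_sum_of_mulVec_eq_zero hMv i, mul_le_mul_of_nonneg_right hdom hvi]

theorem eq_zero_of_mulVec_eq_zero_of_forall_norm_le (hMv : M *ᵥ v = 0) {i : ι}
    (hmax : ∀ k, ‖v k‖ ≤ ‖v i‖) (hstrict : ∑ k ∈ univ.erase i, ‖M i k‖ < ‖M i i‖) :
    v = 0 := by
  have hvi : ‖v i‖ = 0 := by
    by_contra hne
    have hpos : 0 < ‖v i‖ := (norm_nonneg _).lt_of_ne' hne
    linarith [norm_diag_mul_le_sum_of_mulVec_eq_zero hMv i,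
      sum_norm_mul_le_sum_norm_mul_of_forall_norm_le (M := M) hmax,
      mul_lt_mul_of_pos_right hstrict hpos]
  funext k
  exact norm_le_zero_iff.1 (hvi ▸ hmax k)

theorem det_ne_zero_of_irreducible_of_sum_row_le_diag
    (hirr : ∀ i j, Relation.ReflTransGen (fun a b => a ≠ b ∧ M a b ≠ 0) i j)
    (hdom : ∀ i, ∑ j ∈ univ.erase i, ‖M i j‖ ≤ ‖M i i‖)
    (hstrict : ∃ i, ∑ j ∈ univ.erase i, ‖M i j‖ < ‖M i i‖) :
    M.det ≠ 0 := by
  obtain ⟨k, hk⟩ := hstrict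
  intro hdet
  obtain ⟨v, hv, hMv⟩ := exists_mulVec_eq_zero_iff.2 hdet
  obtain ⟨i₀, -, hi₀⟩ := exists_max_image univ (fun j => ‖v j‖) ⟨k, mem_univ k⟩
  have hmax : ∀ j, ‖v j‖ ≤ ‖v i₀‖ := fun j => hi₀ j (mem_univ j)
  have hspread : ∀ j, ‖v j‖ = ‖v i₀‖ := fun j => by
    induction hirr i₀ j with
    | refl => rfl
    | tail _ hbc ih =>
      rw [← ih]
      exact norm_apply_eq_of_mulVec_eq_zero_of_forall_norm_le hMv (ih ▸ hmax) (hdom _) hbc.1 hbc.2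
  exact hv (eq_zero_of_mulVec_eq_zero_of_forall_norm_le hMv ((hspread k).symm ▸ hmax) hk)

end Matrix

/-- Levy–Desplanques type: an irreducible complex matrix that is
diagonally dominant, with strict dominance in at least one row, has nonzero
determinant. -/
theorem stmt14 {n : ℕ} (M : Matrix (Fin n) (Fin n) ℂ)
    (hirr : ∀ i j : Fin n,
      Relation.ReflTransGen (fun a b => a ≠ b ∧ M a b ≠ 0) i j)
    (hdom : ∀ i, ∑ j ∈ Finset.univ.erase i, ‖M i j‖ ≤
      ‖M i i‖)
    (hstrict : ∃ i, ∑ j ∈ Finset.univ.erase i, ‖M i j‖ <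
      ‖M i i‖) :
    M.det ≠ 0 :=
  Matrix.det_ne_zero_of_irreducible_of_sum_row_le_diag hirr hdom hstrict
end

section
/- Suppose Δ is an independent set in the skeleton of the confidence rule (i.e., p_{σ→σ'} = p_{σ'→σ} = 0 for all σ, σ' ∈ Δ). Then every point of the face M_Δ = {η in the simplex : ∑_{σ∈Δ} η_σ = 1} is a fixed point of the mean-field Sznajd dynamics. -/
open Finset

noncomputable def sznajdField (r : ℝ) (q : ℕ) {M : ℕ} (p : Fin M → Fin M → ℝ) (η : Fin M → ℝ)
    (σ : Fin M) : ℝ :=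
  r * ∑ σ', η σ * η σ' * (η σ ^ (q - 1) * p σ' σ - η σ' ^ (q - 1) * p σ σ')

theorem Finset.eq_zero_of_sum_eq_sum_univ_of_notMem {ι β : Type*} [Fintype ι]
    [AddCommGroup β] [PartialOrder β] [IsOrderedAddMonoid β] {f : ι → β} (hf : ∀ i, 0 ≤ f i)
    {s : Finset ι} (hs : ∑ i ∈ s, f i = ∑ i, f i) {i : ι} (hi : i ∉ s) : f i = 0 := by
  classical
  have hcompl : ∑ j ∈ sᶜ, f j = 0 := by
    rwa [← sum_add_sum_compl s f, left_eq_add] at hs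
  exact (sum_eq_zero_iff_of_nonneg fun j _ => hf j).mp hcompl i (mem_compl.mpr hi)

/-- Each summand vanishes: either one of the two opinions is absent from `η`, or both lie in `Δ`
and neither transition between them is allowed. -/
theorem sznajdField_eq_zero_of_independent {M : ℕ} (r : ℝ) (q : ℕ) (p : Fin M → Fin M → ℝ)
    {Δ : Finset (Fin M)} (hind : ∀ σ ∈ Δ, ∀ σ' ∈ Δ, p σ σ' = 0) {η : Fin M → ℝ}
    (hη : ∀ τ ∉ Δ, η τ = 0) (σ : Fin M) : sznajdField r q p η σ = 0 := by
  have hterm : ∀ σ', η σ * η σ' * (η σ ^ (q - 1) * p σ' σ - η σ' ^ (q - 1) * p σ σ') = 0 := by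
    intro σ'
    by_cases hσ : σ ∈ Δ
    · by_cases hσ' : σ' ∈ Δ
      · simp [hind σ' hσ' σ hσ, hind σ hσ σ' hσ']
      · simp [hη σ' hσ']
    · simp [hη σ hσ]
  simp [sznajdField, hterm]

theorem stmt18_general {M : ℕ} (q : ℕ) (r : ℝ)
    (p : Fin M → Fin M → ℝ)
    (Δ : Finset (Fin M))
    (hind : ∀ σ ∈ Δ, ∀ σ' ∈ Δ, p σ σ' = 0)
    (η : Fin M → ℝ) (hpos : ∀ σ, 0 ≤ η σ) (hsum : ∑ σ, η σ = 1)
    (hsupp : ∑ σ ∈ Δ, η σ = 1) :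
    ∀ σ, r * ∑ σ', η σ * η σ' *
      (η σ ^ (q - 1) * p σ' σ - η σ' ^ (q - 1) * p σ σ') = 0 :=
  sznajdField_eq_zero_of_independent r q p hind fun _ hτ =>
    eq_zero_of_sum_eq_sum_univ_of_notMem hpos (hsupp.trans hsum.symm) hτ

/-- if `Δ` is an independent set of the skeleton of the confidence rule
(`p σ σ' = 0` for all `σ, σ' ∈ Δ`), then every point of the face `M_Δ` of the simplex
is a fixed point of the mean-field Sznajd dynamics. -/
theorem stmt18 {M : ℕ} (hM : 1 ≤ M) (q : ℕ) (hq : 2 ≤ q) (r : ℝ) (hr : 0 < r)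
    (p : Fin M → Fin M → ℝ) (hp : ∀ σ σ', 0 ≤ p σ σ')
    (Δ : Finset (Fin M))
    (hind : ∀ σ ∈ Δ, ∀ σ' ∈ Δ, p σ σ' = 0)
    (η : Fin M → ℝ) (hpos : ∀ σ, 0 ≤ η σ) (hsum : ∑ σ, η σ = 1)
    (hsupp : ∑ σ ∈ Δ, η σ = 1) :
    ∀ σ, r * ∑ σ', η σ * η σ' *
      (η σ ^ (q - 1) * p σ' σ - η σ' ^ (q - 1) * p σ σ') = 0 :=
  stmt18_general q r p Δ hind η hpos hsum hsupp
end

section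
/- Suppose the skeleton of the confidence rule has exactly one component covering all opinions and there is a nonempty proper subset Δ of opinions with Δ₋ ∩ complement(Δ) = ∅ (Δ is never convinced from outside). Then at every point of the open simplex (all η_σ > 0), the quantity η_Δ = ∑_{σ∈Δ} η_σ is strictly decreasing: its derivative along the flow equals −r ∑_{σ∈Δ} ∑_{σ'∈ complement(Δ)} η_σ η_{σ'}^q p_{σ→σ'} < 0; in particular there is no fixed point where all opinions coexist. -/
/-- if the skeleton has one component on all `M` opinions and `Δ` is a
nonempty proper set of opinions receiving no arcs from outside, then at every point
of the open simplex the quantity `η_Δ` is strictly decreasing along the flow: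
`∑_{σ∈Δ} F_σ = -r ∑_{σ∈Δ} ∑_{σ'∉Δ} η_σ η_{σ'}^q p_{σ→σ'} < 0`;
in particular no such point is a fixed point. -/
theorem stmt19 {M : ℕ} (hM : 2 ≤ M) (q : ℕ) (hq : 2 ≤ q) (r : ℝ) (hr : 0 < r)
    (p : Fin M → Fin M → ℝ) (hp : ∀ σ σ', 0 ≤ p σ σ')
    (hconn : ∀ i j : Fin M,
      Relation.ReflTransGen (fun a b => 0 < p a b ∨ 0 < p b a) i j)
    (Δ : Finset (Fin M)) (hne : Δ.Nonempty) (hproper : Δ ≠ Finset.univ)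
    (hsource : ∀ τ σ, τ ∉ Δ → σ ∈ Δ → p τ σ = 0)
    (η : Fin M → ℝ) (hpos : ∀ σ, 0 < η σ) (hsum : ∑ σ, η σ = 1) :
    (∑ σ ∈ Δ, r * ∑ σ', η σ * η σ' *
        (η σ ^ (q - 1) * p σ' σ - η σ' ^ (q - 1) * p σ σ')
      = -r * ∑ σ ∈ Δ, ∑ σ' ∈ Δᶜ, η σ * η σ' ^ q * p σ σ') ∧
    (∑ σ ∈ Δ, r * ∑ σ', η σ * η σ' *
        (η σ ^ (q - 1) * p σ' σ - η σ' ^ (q - 1) * p σ σ') < 0) ∧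
    ¬ (∀ σ, r * ∑ σ', η σ * η σ' *
        (η σ ^ (q - 1) * p σ' σ - η σ' ^ (q - 1) * p σ σ') = 0) := by
  have hq1 : q - 1 + 1 = q := by omega
  set g : Fin M → Fin M → ℝ := fun σ σ' =>
    η σ * η σ' * (η σ ^ (q - 1) * p σ' σ - η σ' ^ (q - 1) * p σ σ') with hg
  -- cancellation of the internal (Δ × Δ) part
  have cancel : ∑ σ ∈ Δ, ∑ σ' ∈ Δ, g σ σ' = 0 := by
    have hswap : ∑ σ ∈ Δ, ∑ σ' ∈ Δ, g σ σ' = ∑ σ ∈ Δ, ∑ σ' ∈ Δ, g σ' σ :=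
      Finset.sum_comm
    have hdouble : (∑ σ ∈ Δ, ∑ σ' ∈ Δ, g σ σ') + (∑ σ ∈ Δ, ∑ σ' ∈ Δ, g σ σ') = 0 := by
      nth_rewrite 2 [hswap]
      rw [← Finset.sum_add_distrib]
      refine Finset.sum_eq_zero fun σ _ => ?_
      rw [← Finset.sum_add_distrib]
      refine Finset.sum_eq_zero fun σ' _ => ?_
      simp only [hg]; ring
    linarith
  -- outer part equals the negative crossing sum
  have outer : ∀ σ ∈ Δ, ∀ σ' ∈ Δᶜ, g σ σ' = -(η σ * η σ' ^ q * p σ σ') := by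
    intro σ hσ σ' hσ'
    simp only [hg]
    have hps : η σ' ^ q = η σ' ^ (q - 1) * η σ' := by rw [← pow_succ, hq1]
    rw [hsource σ' σ (Finset.mem_compl.mp hσ') hσ, hps]
    ring
  have eq1 : ∑ σ ∈ Δ, r * ∑ σ', g σ σ'
      = -r * ∑ σ ∈ Δ, ∑ σ' ∈ Δᶜ, η σ * η σ' ^ q * p σ σ' := by
    rw [← Finset.mul_sum]
    have : ∑ σ ∈ Δ, ∑ σ', g σ σ'
        = ∑ σ ∈ Δ, (∑ σ' ∈ Δ, g σ σ' + ∑ σ' ∈ Δᶜ, g σ σ') := by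
      refine Finset.sum_congr rfl fun σ _ => ?_
      rw [Finset.sum_add_sum_compl]
    rw [this, Finset.sum_add_distrib, cancel, zero_add]
    have : ∑ σ ∈ Δ, ∑ σ' ∈ Δᶜ, g σ σ'
        = ∑ σ ∈ Δ, ∑ σ' ∈ Δᶜ, -(η σ * η σ' ^ q * p σ σ') := by
      refine Finset.sum_congr rfl fun σ hσ => Finset.sum_congr rfl fun σ' hσ' =>
        outer σ hσ σ' hσ'
    rw [this]
    simp
  -- existence of a crossing arc
  obtain ⟨i, hi⟩ := hne
  obtain ⟨j, hj⟩ : ∃ j, j ∉ Δ := by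
    by_contra h; push_neg at h; exact hproper (Finset.eq_univ_of_forall h)
  have cross : ∃ a ∈ Δ, ∃ b, b ∉ Δ ∧ 0 < p a b := by
    have main : ∀ j, Relation.ReflTransGen (fun a b => 0 < p a b ∨ 0 < p b a) i j →
        j ∉ Δ → ∃ a ∈ Δ, ∃ b, b ∉ Δ ∧ 0 < p a b := by
      intro j h
      induction h with
      | refl => intro hj; exact absurd hi hj
      | @tail b c _ hbc ih =>
        intro hc
        by_cases hb : b ∈ Δ
        · rcases hbc with h1 | h2
          · exact ⟨b, hb, c, hc, h1⟩
          · exact absurd (hsource c b hc hb) h2.ne'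
        · exact ih hb
    exact main j (hconn i j) hj
  -- the crossing sum is positive
  have Tpos : 0 < ∑ σ ∈ Δ, ∑ σ' ∈ Δᶜ, η σ * η σ' ^ q * p σ σ' := by
    obtain ⟨a, ha, b, hb, hpab⟩ := cross
    refine Finset.sum_pos' (fun σ _ => Finset.sum_nonneg fun σ' _ => ?_) ⟨a, ha, ?_⟩
    · exact mul_nonneg (mul_nonneg (hpos σ).le (pow_nonneg (hpos σ').le q)) (hp σ σ')
    · refine Finset.sum_pos' (fun σ' _ => ?_) ⟨b, Finset.mem_compl.mpr hb, ?_⟩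
      · exact mul_nonneg (mul_nonneg (hpos a).le (pow_nonneg (hpos σ').le q)) (hp a σ')
      · exact mul_pos (mul_pos (hpos a) (pow_pos (hpos b) q)) hpab
  have lt0 : ∑ σ ∈ Δ, r * ∑ σ', g σ σ' < 0 := by
    rw [eq1]
    have : 0 < r * ∑ σ ∈ Δ, ∑ σ' ∈ Δᶜ, η σ * η σ' ^ q * p σ σ' := mul_pos hr Tpos
    linarith
  refine ⟨eq1, lt0, fun h => ?_⟩
  have : ∑ σ ∈ Δ, r * ∑ σ', g σ σ' = 0 :=
    Finset.sum_eq_zero fun σ _ => h σ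
  linarith
end
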